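/- With M_c and K_d as above, the smallest positive integer d for which K_d is represented by M_c is d = 4c − 3. -/

import Mathlib

open Matrix

/-- Square integer matrices of size `n`, used as Gram matrices of lattices. -/
abbrev Mat (n : ℕ) := Matrix (Fin n) (Fin n) ℤ

/-- `G` is the Gram matrix of a positive definite integral lattice:
it is symmetric and `vᵀ G v > 0` for every nonzero integer vector `v`. -/
def PosDefInt {n : ℕ} (G : Mat n) : Prop :=
  G.IsSymm ∧ ∀ v : Fin n → ℤ, v ≠ 0 → 0 < v ⬝ᵥ G.mulVec v

/-- The lattice with Gram matrix `L` represents the lattice with Gram matrix `N`: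
there is an integral matrix `T` (whose rows are the coordinates of the images of
the basis vectors) with `T L Tᵀ = N`. -/
def Represents {m n : ℕ} (L : Mat m) (N : Mat n) : Prop :=
  ∃ T : Matrix (Fin n) (Fin m) ℤ, T * L * T.transpose = N

/-- Isometry of (positive definite) lattices, expressed as mutual representation. -/
def Isom {m n : ℕ} (A : Mat m) (B : Mat n) : Prop :=
  Represents A B ∧ Represents B A

theorem Represents.rfl' {n : ℕ} (A : Mat n) : Represents A A :=
  ⟨1, by simp⟩

theorem Represents.trans' {a b c : ℕ} {A : Mat a} {B : Mat b} {C : Mat c}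
    (h1 : Represents A B) (h2 : Represents B C) : Represents A C := by
  obtain ⟨T1, h1⟩ := h1
  obtain ⟨T2, h2⟩ := h2
  refine ⟨T2 * T1, ?_⟩
  rw [← h2, ← h1]
  simp [Matrix.mul_assoc, Matrix.transpose_mul]

/-- A positive definite integral lattice of rank `n`, given by a Gram matrix. -/
def QLat (n : ℕ) := {G : Mat n // PosDefInt G}

instance latSetoid (n : ℕ) : Setoid (QLat n) where
  r A B := Isom A.1 B.1
  iseqv := ⟨fun A => ⟨Represents.rfl' _, Represents.rfl' _⟩,
    fun h => ⟨h.2, h.1⟩,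
    fun h1 h2 => ⟨h1.1.trans' h2.1, h2.2.trans' h1.2⟩⟩

/-- Isometry classes of positive definite integral lattices of rank `n` (`Φ_n`). -/
def Cls (n : ℕ) := Quotient (latSetoid n)

/-- The isometry class of a lattice. -/
def cls {n : ℕ} (L : QLat n) : Cls n := Quotient.mk _ L

/-- A lattice represents an isometry class. -/
def RepCls {m n : ℕ} (L : QLat m) (c : Cls n) : Prop :=
  ∃ N : QLat n, cls N = c ∧ Represents L.1 N.1

/-- The `n`-exceptional set of `L`: the classes of rank-`n` positive definite
integral lattices not represented by `L`. -/
def ExcSet (n : ℕ) {m : ℕ} (L : QLat m) : Set (Cls n) :=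
  {c : Cls n | ¬ RepCls L c}
/-- Gram matrix of the root lattice `A_n` with respect to the simple roots
`α_j = e_{j-1} - e_j`. -/
def Agram (n : ℕ) : Mat n :=
  Matrix.of fun i j =>
    if i = j then 2
    else if (i : ℕ) + 1 = (j : ℕ) ∨ (j : ℕ) + 1 = (i : ℕ) then -1
    else 0

/-- Gram matrix of the lattice `(A_n ⊥ ℤz) + ℤ([i] + z/(n+1))`, where `Q(z) = k(n+1)`
and `q = (i(n+1-i) + k)/(n+1)` is the norm of the glued vector `[i] + z/(n+1)`:
the Cartan matrix of `A_n` bordered by the row/column `B(α_j, [i]) = δ_{j, n+1-i}`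
with corner entry `q`. -/
def AGlue (n i : ℕ) (q : ℤ) : Mat (n + 1) :=
  Matrix.of fun r c =>
    if hr : (r : ℕ) < n then
      if hc : (c : ℕ) < n then Agram n ⟨r, hr⟩ ⟨c, hc⟩
      else if (r : ℕ) = n - i then 1 else 0
    else
      if hc : (c : ℕ) < n then (if (c : ℕ) = n - i then 1 else 0)
      else q

/-- Gram matrix of `M_c = (A₄ ⊥ ℤz) + ℤ([1] + z/5)` with `Q(z) = 25c - 20`
(the norm of the glued vector is `c`). -/
def Mgram (c : ℤ) : Mat 5 := AGlue 4 1 c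

/-- Gram matrix of `K_d = (A₄ ⊥ ℤw) + ℤ([2] + w/5)` with `Q(w) = 25d - 5`
(the norm of the glued vector is `d + 1`). -/
def Kgram (d : ℤ) : Mat 5 := AGlue 4 2 (d + 1)

/-!
Taking determinants in `T M_c Tᵀ = K_d` gives `5d - 1 = (det T)² (5c - 4)`. Reducing mod 5,
`(det T)² ≡ 4`, so `(det T)² ≥ 4` and hence `5d - 1 ≥ 4 (5c - 4)`, i.e. `d ≥ 4c - 3`.
The bound is attained: `α₁, …, α₄, 2([1] + z/5) - α₄` span a copy of `K_{4c-3}` in `M_c`,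
since the last vector has norm `4c - 2` and, like the glue vector of `K_d`, pairs to `1`
with `α₃` and to `0` with the other simple roots.
-/

theorem Represents.exists_det_eq {n : ℕ} {L N : Mat n} (h : Represents L N) :
    ∃ t : ℤ, N.det = t ^ 2 * L.det := by
  obtain ⟨T, rfl⟩ := h
  exact ⟨T.det, by rw [det_mul, det_mul, det_transpose]; ring⟩

theorem Int.four_le_sq_of_sq_modEq_four {t : ℤ} (h : t ^ 2 ≡ 4 [ZMOD 5]) : 4 ≤ t ^ 2 := by
  by_contra! hlt
  have : |t| < 2 := by nlinarith [sq_abs t, abs_nonneg t]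
  rw [abs_lt] at this
  obtain ⟨hlo, hhi⟩ := this
  interval_cases t <;> revert h <;> decide

theorem Mgram_eq (c : ℤ) : Mgram c =
    !![2, -1, 0, 0, 0; -1, 2, -1, 0, 0; 0, -1, 2, -1, 0; 0, 0, -1, 2, 1; 0, 0, 0, 1, c] := by
  ext i j; fin_cases i <;> fin_cases j <;> rfl

theorem Kgram_eq (d : ℤ) : Kgram d =
    !![2, -1, 0, 0, 0; -1, 2, -1, 0, 0; 0, -1, 2, -1, 1; 0, 0, -1, 2, 0; 0, 0, 1, 0, d + 1] := by
  ext i j; fin_cases i <;> fin_cases j <;> rfl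

theorem det_Mgram (c : ℤ) : (Mgram c).det = 5 * c - 4 := by
  rw [Mgram_eq]
  simp [det_succ_row_zero, Fin.sum_univ_succ, Fin.succAbove]
  ring

theorem det_Kgram (d : ℤ) : (Kgram d).det = 5 * d - 1 := by
  rw [Kgram_eq]
  simp [det_succ_row_zero, Fin.sum_univ_succ, Fin.succAbove]
  ring

theorem represents_Mgram_Kgram (c : ℤ) : Represents (Mgram c) (Kgram (4 * c - 3)) := by
  refine ⟨!![1, 0, 0, 0, 0; 0, 1, 0, 0, 0; 0, 0, 1, 0, 0; 0, 0, 0, 1, 0; 0, 0, 0, -1, 2], ?_⟩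
  rw [Mgram_eq, Kgram_eq]
  ext i j
  fin_cases i <;> fin_cases j <;> simp [mul_apply, Fin.sum_univ_five]
  ring

theorem le_of_represents_Mgram_Kgram {c d : ℤ} (hc : 0 < c)
    (h : Represents (Mgram c) (Kgram d)) : 4 * c - 3 ≤ d := by
  obtain ⟨t, ht⟩ := h.exists_det_eq
  rw [det_Mgram, det_Kgram] at ht
  have hmod : t ^ 2 ≡ 4 [ZMOD 5] :=
    Int.modEq_iff_dvd.mpr ⟨t ^ 2 * c - d - t ^ 2 + 1, by linear_combination ht⟩
  have hsq := mul_le_mul_of_nonneg_right (Int.four_le_sq_of_sq_modEq_four hmod)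
    (by omega : (0 : ℤ) ≤ 5 * c - 4)
  linarith

/-- The smallest positive integer `d` for which `K_d` is
represented by `M_c` is `d = 4c - 3`. -/
theorem least_Kd_in_Mc (c : ℤ) (hc : 0 < c) :
    IsLeast {d : ℤ | 0 < d ∧ Represents (Mgram c) (Kgram d)} (4 * c - 3) :=
  ⟨⟨by omega, represents_Mgram_Kgram c⟩, fun _ ⟨_, h⟩ => le_of_represents_Mgram_Kgram hc h⟩
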